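/- For every positive integer m, the infinite series sum over i >= 1 of (-1)^(m(i-1)) / (L_{m(i-1)} * L_{m(i+1)}) converges to 1/(√5 * F_{2m}) - 1/(2 * L_m^2). -/

import Mathlib

def lucas : ℕ → ℕ
  | 0 => 2
  | 1 => 1
  | n + 2 => lucas (n + 1) + lucas n

/-!
By Binet's formulas, `F (a + b) L a - F a L (a + b) = 2 (-1)^a F b`, so with `a = m i`, `b = 2m`
the `i`-th term is `(t (i + 2) - t i) / (2 F (2m))` for `t i = F (m i) / L (m i)`.
Since `√5 F n = L n - 2 ψ^n`, the deviations `e i = t i - 1/√5` are dominated by `|ψ^m|^i`,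
hence summable, and the step-two telescoping sum equals `-(e 0 + e 1) / (2 F (2m))`.
-/

open Real
open scoped goldenRatio

theorem coe_lucas_eq : ∀ n : ℕ, (lucas n : ℝ) = φ ^ n + ψ ^ n
  | 0 => by norm_num [lucas]
  | 1 => by norm_num [lucas, goldenRatio_add_goldenConj]
  | n + 2 => by
      rw [lucas, Nat.cast_add, coe_lucas_eq (n + 1), coe_lucas_eq n]
      linear_combination φ ^ n * goldenRatio_sq + ψ ^ n * goldenConj_sq -
        (φ ^ n + ψ ^ n) / 2 * sq_sqrt (show (0 : ℝ) ≤ 5 by norm_num)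

theorem lucas_pos (n : ℕ) : 0 < lucas n := by
  induction n using Nat.twoStepInduction with
  | zero => decide
  | one => decide
  | more n ih₁ ih₂ => rw [lucas]; omega

theorem fib_two_mul_eq_fib_mul_lucas (n : ℕ) : (Nat.fib (2 * n) : ℝ) = Nat.fib n * lucas n := by
  rw [coe_fib_eq, coe_fib_eq, coe_lucas_eq, mul_comm 2 n, pow_mul, pow_mul]
  field_simp
  ring

theorem fib_add_mul_lucas_sub_fib_mul_lucas_add (a b : ℕ) :
    (Nat.fib (a + b) : ℝ) * lucas a - Nat.fib a * lucas (a + b) = 2 * (-1) ^ a * Nat.fib b := by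
  have hneg : (-1 : ℝ) ^ a = φ ^ a * ψ ^ a := by rw [← mul_pow, goldenRatio_mul_goldenConj]
  rw [coe_fib_eq, coe_fib_eq, coe_fib_eq, coe_lucas_eq, coe_lucas_eq, hneg, pow_add, pow_add]
  field_simp
  ring

theorem sqrt_five_mul_fib (n : ℕ) : √5 * Nat.fib n = lucas n - 2 * ψ ^ n := by
  rw [coe_fib_eq, coe_lucas_eq, mul_div_cancel₀ _ (by positivity)]
  ring

theorem neg_one_pow_div_lucas_mul_lucas_add (a : ℕ) {b : ℕ} (hb : 0 < b) :
    (-1 : ℝ) ^ a / (lucas a * lucas (a + b)) =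
      (Nat.fib (a + b) / lucas (a + b) - Nat.fib a / lucas a) / (2 * Nat.fib b) := by
  have ha : (lucas a : ℝ) ≠ 0 := by exact_mod_cast (lucas_pos a).ne'
  have hab : (lucas (a + b) : ℝ) ≠ 0 := by exact_mod_cast (lucas_pos (a + b)).ne'
  have hfib : (Nat.fib b : ℝ) ≠ 0 := by exact_mod_cast (Nat.fib_pos.mpr hb).ne'
  field_simp
  linear_combination -fib_add_mul_lucas_sub_fib_mul_lucas_add a b

theorem abs_fib_div_lucas_sub_inv_sqrt_five_le (n : ℕ) :
    |Nat.fib n / lucas n - 1 / √5| ≤ |ψ| ^ n := by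
  have hL : (1 : ℝ) ≤ lucas n := by exact_mod_cast lucas_pos n
  have hsqrt : (2 : ℝ) ≤ √5 := (le_sqrt zero_le_two (by norm_num)).mpr (by norm_num)
  have hdev : Nat.fib n / lucas n - 1 / √5 = -(2 / (√5 * lucas n)) * ψ ^ n := by
    have := sqrt_five_mul_fib n
    field_simp
    linear_combination this
  rw [hdev, abs_mul, abs_neg, abs_pow, abs_of_pos (by positivity)]
  refine mul_le_of_le_one_left (by positivity) ?_
  rw [div_le_one (by positivity)]
  nlinarith

theorem summable_fib_mul_div_lucas_mul_sub_inv_sqrt_five {m : ℕ} (hm : 0 < m) :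
    Summable fun i : ℕ => Nat.fib (m * i) / (lucas (m * i) : ℝ) - 1 / √5 := by
  have hψ : |ψ| ^ m < 1 := by
    refine pow_lt_one₀ (abs_nonneg _) ?_ hm.ne'
    rw [abs_of_neg goldenConj_neg]
    linarith [neg_one_lt_goldenConj]
  refine Summable.of_norm_bounded (summable_geometric_of_lt_one (by positivity) hψ) fun i => ?_
  rw [Real.norm_eq_abs, ← pow_mul]
  exact abs_fib_div_lucas_sub_inv_sqrt_five_le _

theorem stmt_6 (m : ℕ) (hm : 0 < m) :
    HasSum (fun i : ℕ =>
      (-1 : ℝ) ^ (m * i) /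
        ((lucas (m * i) : ℝ) * (lucas (m * (i + 2)) : ℝ)))
      (1 / (Real.sqrt 5 * (Nat.fib (2 * m) : ℝ)) - 1 / (2 * (lucas m : ℝ) ^ 2)) := by
  set e : ℕ → ℝ := fun i => Nat.fib (m * i) / (lucas (m * i) : ℝ) - 1 / √5
  obtain ⟨S, hS⟩ := summable_fib_mul_div_lucas_mul_sub_inv_sqrt_five hm
  have hshift : HasSum (fun i => e (i + 2)) (S - ∑ i ∈ Finset.range 2, e i) :=
    (hasSum_nat_add_iff' 2).mpr hS
  have hterm : ∀ i, (-1 : ℝ) ^ (m * i) / (lucas (m * i) * lucas (m * (i + 2))) =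
      (e (i + 2) - e i) / (2 * Nat.fib (2 * m)) := fun i => by
    have hi : m * (i + 2) = m * i + 2 * m := by ring
    simp only [e, hi]
    rw [neg_one_pow_div_lucas_mul_lucas_add _ (by omega : 0 < 2 * m)]
    ring
  have hL : (lucas m : ℝ) ≠ 0 := by exact_mod_cast (lucas_pos m).ne'
  have hF : (Nat.fib m : ℝ) ≠ 0 := by exact_mod_cast (Nat.fib_pos.mpr hm).ne'
  have hvalue : 1 / (√5 * Nat.fib (2 * m)) - 1 / (2 * (lucas m : ℝ) ^ 2) =
      (S - ∑ i ∈ Finset.range 2, e i - S) / (2 * Nat.fib (2 * m)) := by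
    simp only [e, Finset.sum_range_succ, Finset.sum_range_zero, mul_zero, mul_one, Nat.fib_zero,
      Nat.cast_zero, zero_div, fib_two_mul_eq_fib_mul_lucas]
    field_simp
    ring
  simp_rw [hterm, hvalue]
  exact (hshift.sub hS).div_const _
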